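/- arXiv:1904.07006 — 2 statements merged into one kernel-verified Lean document; each statement's English description precedes it below -/
import Mathlib

section
/- Let f : [a,b] → ℝ with f' continuous on [a,b] and f'' existing and bounded on (a,b). Define the n-th polygonal length L_n = Σ_{k=0}^{n-1} sqrt(Δx² + (f(x_{k+1}) − f(x_k))²) where Δx = (b-a)/n and x_k = a + kΔx. Then L_n converges to ∫_a^b sqrt(1 + f'(x)²) dx as n → ∞. -/
/-!
By the mean value theorem the `k`-th chord has length `Δx * √(1 + f' c_k ^ 2)` for some `c_k`
inside the `k`-th cell, so `L_n` is a tagged Riemann sum of `√(1 + f' ^ 2)`. Since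
`u ↦ √(1 + u²)` is `1`-Lipschitz and `|f''| ≤ M`, this integrand is `M`-Lipschitz on `(a, b)`;
hence each cell contributes an error of at most `M * Δx²`, and
`|L_n - ∫ₐᵇ √(1 + f'²)| ≤ M (b - a)² / n`.
-/

open Set Filter MeasureTheory

lemma abs_sqrt_one_add_sq_sub_le (u v : ℝ) :
    |√(1 + u ^ 2) - √(1 + v ^ 2)| ≤ |u - v| := by
  have hu : √(1 + u ^ 2) ^ 2 = 1 + u ^ 2 := Real.sq_sqrt (by positivity)
  have hv : √(1 + v ^ 2) ^ 2 = 1 + v ^ 2 := Real.sq_sqrt (by positivity)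
  have hsum : 0 < √(1 + u ^ 2) + √(1 + v ^ 2) := by positivity
  have hu' : |u| ≤ √(1 + u ^ 2) := Real.abs_le_sqrt (by linarith)
  have hv' : |v| ≤ √(1 + v ^ 2) := Real.abs_le_sqrt (by linarith)
  rw [← mul_le_mul_iff_left₀ hsum, ← abs_of_pos hsum, ← abs_mul]
  calc |(√(1 + u ^ 2) - √(1 + v ^ 2)) * (√(1 + u ^ 2) + √(1 + v ^ 2))|
      = |u - v| * |u + v| := by rw [← abs_mul]; congr 1; nlinarith
    _ ≤ |u - v| * (√(1 + u ^ 2) + √(1 + v ^ 2)) := by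
      gcongr; exact (abs_add_le u v).trans (add_le_add hu' hv')
    _ = _ := by rw [abs_of_pos hsum]

lemma exists_mem_Ioo_chord_length_eq {f f' : ℝ → ℝ} {x y : ℝ} (hxy : x < y)
    (hf : ∀ t ∈ Icc x y, HasDerivAt f (f' t) t) :
    ∃ c ∈ Ioo x y, √((y - x) ^ 2 + (f y - f x) ^ 2) = (y - x) * √(1 + f' c ^ 2) := by
  obtain ⟨c, hc, hslope⟩ := exists_hasDerivAt_eq_slope f f' hxy
    (fun t ht => (hf t ht).continuousAt.continuousWithinAt)
    (fun t ht => hf t (Ioo_subset_Icc_self ht))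
  refine ⟨c, hc, ?_⟩
  have hrise : f y - f x = (y - x) * f' c := by
    rw [hslope]; field_simp [(sub_pos.2 hxy).ne']
  rw [hrise, show (y - x) ^ 2 + ((y - x) * f' c) ^ 2 = (y - x) ^ 2 * (1 + f' c ^ 2) by ring,
    Real.sqrt_mul (sq_nonneg _), Real.sqrt_sq (sub_pos.2 hxy).le]

lemma abs_mul_sub_integral_le {g : ℝ → ℝ} {x y C : ℝ} (hxy : x ≤ y) (c : ℝ)
    (hg : IntervalIntegrable g volume x y) (hC : ∀ t ∈ Ioo x y, |g c - g t| ≤ C) :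
    |(y - x) * g c - ∫ t in x..y, g t| ≤ C * (y - x) := by
  have hdiff : (y - x) * g c - ∫ t in x..y, g t = ∫ t in Ioo x y, (g c - g t) := by
    rw [← integral_Ioc_eq_integral_Ioo, ← intervalIntegral.integral_of_le hxy,
      intervalIntegral.integral_sub intervalIntegrable_const hg,
      intervalIntegral.integral_const, smul_eq_mul]
  rw [hdiff]
  simpa [Real.volume_real_Ioo_of_le hxy] using
    norm_setIntegral_le_of_norm_le_const (f := fun t => g c - g t) (μ := volume)
      measure_Ioo_lt_top hC

lemma add_mul_div_mem_Icc {a b : ℝ} (hab : a ≤ b) {k n : ℕ} (hk : k ≤ n) :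
    a + k * ((b - a) / n) ∈ Icc a b := by
  have hkn : (k : ℝ) / n ≤ 1 := div_le_one_of_le₀ (by exact_mod_cast hk) (Nat.cast_nonneg n)
  have hstep : (k : ℝ) * ((b - a) / n) = k / n * (b - a) := by ring
  rw [hstep]
  exact ⟨le_add_of_nonneg_right (by positivity),
    by linarith [mul_le_of_le_one_left (sub_nonneg.2 hab) hkn]⟩

lemma abs_uniformRiemannSum_sub_integral_le {g : ℝ → ℝ} {a b K : ℝ} (hab : a ≤ b)
    (hK : 0 ≤ K) (hg : ContinuousOn g (Icc a b))
    (hlip : ∀ s ∈ Ioo a b, ∀ t ∈ Ioo a b, |g s - g t| ≤ K * |s - t|)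
    {n : ℕ} (hn : 0 < n) {c : ℕ → ℝ}
    (hc : ∀ k < n, c k ∈ Ioo (a + k * ((b - a) / n)) (a + (k + 1) * ((b - a) / n))) :
    |∑ k ∈ Finset.range n, (b - a) / n * g (c k) - ∫ t in a..b, g t| ≤ K * (b - a) ^ 2 / n := by
  set h := (b - a) / n with hh
  have hh0 : 0 ≤ h := by positivity
  let x : ℕ → ℝ := fun k => a + k * h
  have hx0 : x 0 = a := by simp [x]
  have hxn : x n = b := by simp only [x, hh]; field_simp; ring
  have hstep (k : ℕ) : x (k + 1) - x k = h := by simp only [x]; push_cast; ring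
  have hx_mem (k : ℕ) (hk : k ≤ n) : x k ∈ Icc a b := add_mul_div_mem_Icc hab hk
  have hint (k : ℕ) (hk : k < n) : IntervalIntegrable g volume (x k) (x (k + 1)) := by
    refine (hg.mono ?_).intervalIntegrable
    rw [uIcc_of_le (by linarith [hstep k])]
    exact Icc_subset_Icc (hx_mem k hk.le).1 (hx_mem (k + 1) hk).2
  have hterm (k : ℕ) (hk : k < n) :
      |h * g (c k) - ∫ t in x k..x (k + 1), g t| ≤ K * h * h := by
    have hck : c k ∈ Ioo (x k) (x (k + 1)) := by simpa [x] using hc k hk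
    have hsub : Ioo (x k) (x (k + 1)) ⊆ Ioo a b :=
      Ioo_subset_Ioo (hx_mem k hk.le).1 (hx_mem (k + 1) hk).2
    have hbound (t : ℝ) (ht : t ∈ Ioo (x k) (x (k + 1))) : |g (c k) - g t| ≤ K * h := by
      have hct : |c k - t| ≤ h := by
        rw [abs_sub_le_iff]; constructor <;> linarith [hck.1, hck.2, ht.1, ht.2, hstep k]
      exact (hlip _ (hsub hck) _ (hsub ht)).trans (by gcongr)
    have := abs_mul_sub_integral_le (by linarith [hstep k]) (c k) (hint k hk) hbound
    rwa [hstep] at this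
  calc |∑ k ∈ Finset.range n, h * g (c k) - ∫ t in a..b, g t|
      = |∑ k ∈ Finset.range n, (h * g (c k) - ∫ t in x k..x (k + 1), g t)| := by
        rw [Finset.sum_sub_distrib, intervalIntegral.sum_integral_adjacent_intervals hint, hx0, hxn]
    _ ≤ ∑ k ∈ Finset.range n, |h * g (c k) - ∫ t in x k..x (k + 1), g t| :=
        Finset.abs_sum_le_sum_abs _ _
    _ ≤ ∑ k ∈ Finset.range n, K * h * h :=
        Finset.sum_le_sum fun k hk => hterm k (Finset.mem_range.1 hk)
    _ = K * (b - a) ^ 2 / n := by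
        rw [Finset.sum_const, Finset.card_range, nsmul_eq_mul, hh]; field_simp

noncomputable def polygonLength (f : ℝ → ℝ) (a b : ℝ) (n : ℕ) : ℝ :=
  ∑ k ∈ Finset.range n,
    √(((b - a) / n) ^ 2 + (f (a + (k + 1) * ((b - a) / n)) - f (a + k * ((b - a) / n))) ^ 2)

lemma abs_polygonLength_sub_integral_le {a b M : ℝ} (hab : a < b) {f f' f'' : ℝ → ℝ}
    (hf : ∀ x ∈ Icc a b, HasDerivAt f (f' x) x) (hf'cont : ContinuousOn f' (Icc a b))
    (hf' : ∀ x ∈ Ioo a b, HasDerivAt f' (f'' x) x) (hM : ∀ x ∈ Ioo a b, |f'' x| ≤ M)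
    {n : ℕ} (hn : 0 < n) :
    |polygonLength f a b n - ∫ x in a..b, √(1 + f' x ^ 2)| ≤ M * (b - a) ^ 2 / n := by
  have hM0 : 0 ≤ M := (abs_nonneg _).trans (hM ((a + b) / 2) ⟨by linarith, by linarith⟩)
  have hf'_lip (s : ℝ) (hs : s ∈ Ioo a b) (t : ℝ) (ht : t ∈ Ioo a b) :
      |f' s - f' t| ≤ M * |s - t| := by
    simpa only [Real.norm_eq_abs] using (convex_Ioo a b).norm_image_sub_le_of_norm_hasDerivWithin_le
      (fun z hz => (hf' z hz).hasDerivWithinAt) hM ht hs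
  have hchord (k : ℕ) (hk : k < n) :
      ∃ c ∈ Ioo (a + k * ((b - a) / n)) (a + (k + 1) * ((b - a) / n)),
        √(((b - a) / n) ^ 2 + (f (a + (k + 1) * ((b - a) / n)) - f (a + k * ((b - a) / n))) ^ 2)
          = (b - a) / n * √(1 + f' c ^ 2) := by
    have hx := add_mul_div_mem_Icc hab.le hk.le
    have hy : a + (k + 1) * ((b - a) / n) ∈ Icc a b := by
      simpa using add_mul_div_mem_Icc hab.le (Nat.succ_le_of_lt hk)
    have hlen : a + (k + 1) * ((b - a) / n) - (a + k * ((b - a) / n)) = (b - a) / n := by ring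
    obtain ⟨c, hc, hchord⟩ := exists_mem_Ioo_chord_length_eq
      (by linarith [div_pos (sub_pos.2 hab) (Nat.cast_pos.2 hn)])
      fun t ht => hf t (Icc_subset_Icc hx.1 hy.2 ht)
    exact ⟨c, hc, by rwa [hlen] at hchord⟩
  choose! c hc hterm using hchord
  rw [polygonLength, Finset.sum_congr rfl fun k hk => hterm k (Finset.mem_range.1 hk)]
  exact abs_uniformRiemannSum_sub_integral_le hab.le hM0
    (continuousOn_const.add (hf'cont.pow 2)).sqrt
    (fun s hs t ht => (abs_sqrt_one_add_sq_sub_le _ _).trans (hf'_lip s hs t ht)) hn hc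

theorem stmt_3 (a b M : ℝ) (hab : a < b) (f f' f'' : ℝ → ℝ)
    (hf : ∀ x ∈ Set.Icc a b, HasDerivAt f (f' x) x)
    (hf'cont : ContinuousOn f' (Set.Icc a b))
    (hf' : ∀ x ∈ Set.Ioo a b, HasDerivAt f' (f'' x) x)
    (hM : ∀ x ∈ Set.Ioo a b, |f'' x| ≤ M) :
    Filter.Tendsto
      (fun n : ℕ => ∑ k ∈ Finset.range n,
        Real.sqrt (((b - a) / n)^2 +
          (f (a + (k + 1) * ((b - a) / n)) - f (a + k * ((b - a) / n)))^2))
      Filter.atTop (nhds (∫ x in a..b, Real.sqrt (1 + f' x ^ 2))) := by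
  refine tendsto_sub_nhds_zero_iff.1
    (squeeze_zero_norm' ?_ (tendsto_const_div_atTop_nhds_zero_nat (M * (b - a) ^ 2)))
  filter_upwards [eventually_gt_atTop 0] with n hn
  exact abs_polygonLength_sub_integral_le hab hf hf'cont hf' hM hn
end

section
/- With the hypotheses and notation as in the uniform polygonal arc length theorem (f' continuous on [a,b], |f''| ≤ M on (a,b)), for every n ≥ 1 one has |L_n − Σ_{k=0}^{n-1} sqrt(1 + f'(x_k)²)·Δx| ≤ M(b-a)²/(2n), where L_n is the n-th uniform polygonal length. -/
/-!
Each chord of the polygon is compared with the tangent segment at its left node. With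
`u = f(x_{k+1}) - f(x_k)`, the triangle inequality in the plane gives
`|√(Δx² + u²) - √(1 + f'(x_k)²) Δx| ≤ |u - f'(x_k) Δx|`, and since `f'` is `M`-Lipschitz by
the mean value theorem, Taylor's estimate bounds the right side by `M Δx² / 2`. Summing the
`n` errors gives `n · M Δx² / 2 = M (b - a)² / (2n)`.
-/

open Set Finset

lemma abs_sub_le_mul_of_abs_deriv_le {g g' : ℝ → ℝ} {a b M x y : ℝ}
    (hg : ContinuousOn g (Icc a b)) (hg' : ∀ t ∈ Ioo a b, HasDerivAt g (g' t) t)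
    (hM : ∀ t ∈ Ioo a b, |g' t| ≤ M) (hx : x ∈ Icc a b) (hy : y ∈ Icc a b) (hxy : x ≤ y) :
    |g y - g x| ≤ M * (y - x) := by
  rcases hxy.eq_or_lt with rfl | hxy
  · simp
  have hsub : Icc x y ⊆ Icc a b := Icc_subset_Icc hx.1 hy.2
  obtain ⟨ξ, hξ, hslope⟩ := exists_hasDerivAt_eq_slope g g' hxy (hg.mono hsub)
    fun t ht => hg' t (Ioo_subset_Ioo hx.1 hy.2 ht)
  have hdiff : g y - g x = g' ξ * (y - x) := by
    rw [hslope]; field_simp [(sub_pos.mpr hxy).ne']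
  rw [hdiff, abs_mul, abs_of_pos (sub_pos.mpr hxy)]
  exact mul_le_mul_of_nonneg_right (hM ξ (Ioo_subset_Ioo hx.1 hy.2 hξ)) (sub_pos.mpr hxy).le

lemma abs_sub_sub_deriv_mul_le {f f' : ℝ → ℝ} {c d M : ℝ} (hcd : c ≤ d)
    (hf : ∀ x ∈ Icc c d, HasDerivAt f (f' x) x)
    (hM : ∀ x ∈ Icc c d, |f' x - f' c| ≤ M * (x - c)) :
    |f d - f c - f' c * (d - c)| ≤ M * (d - c) ^ 2 / 2 := by
  have hg : ∀ x ∈ Icc c d,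
      HasDerivAt (fun y => f y - f c - f' c * (y - c)) (f' x - f' c) x := fun x hx => by
    simpa using ((hf x hx).sub_const (f c)).fun_sub
      (((hasDerivAt_id' x).sub_const c).const_mul (f' c))
  have hB : ∀ x, HasDerivAt (fun y => M * (y - c) ^ 2 / 2) (M * (x - c)) x := fun x => by
    refine (((((hasDerivAt_id' x).sub_const c).fun_pow 2).const_mul M).div_const 2).congr_deriv ?_
    push_cast; ring
  refine image_norm_le_of_norm_deriv_right_le_deriv_boundary
    (fun x hx => (hg x hx).continuousAt.continuousWithinAt)
    (fun x hx => (hg x (Ico_subset_Icc_self hx)).hasDerivWithinAt) (by simp) hB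
    (fun x hx => hM x (Ico_subset_Icc_self hx)) ⟨hcd, le_rfl⟩

lemma abs_sqrt_sq_add_sq_sub_le (t p q : ℝ) :
    |√(t ^ 2 + p ^ 2) - √(t ^ 2 + q ^ 2)| ≤ |p - q| := by
  have h := abs_norm_sub_norm_le ((t : ℂ) + p * Complex.I) ((t : ℂ) + q * Complex.I)
  rwa [Complex.norm_add_mul_I, Complex.norm_add_mul_I, add_sub_add_left_eq_sub, ← sub_mul,
    ← Complex.ofReal_sub, norm_mul, Complex.norm_I, mul_one, Complex.norm_real,
    Real.norm_eq_abs] at h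

lemma abs_chord_length_sub_tangent_length_le {f f' : ℝ → ℝ} {c d M : ℝ} (hcd : c ≤ d)
    (hf : ∀ x ∈ Icc c d, HasDerivAt f (f' x) x)
    (hM : ∀ x ∈ Icc c d, |f' x - f' c| ≤ M * (x - c)) :
    |√((d - c) ^ 2 + (f d - f c) ^ 2) - √(1 + f' c ^ 2) * (d - c)| ≤ M * (d - c) ^ 2 / 2 := by
  have htangent : √(1 + f' c ^ 2) * (d - c) = √((d - c) ^ 2 + (f' c * (d - c)) ^ 2) := by
    rw [mul_pow, ← Real.sqrt_sq (sub_nonneg.mpr hcd), ← Real.sqrt_mul (by positivity),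
      Real.sqrt_sq (sub_nonneg.mpr hcd)]
    ring_nf
  rw [htangent]
  exact (abs_sqrt_sq_add_sq_sub_le _ _ _).trans (abs_sub_sub_deriv_mul_le hcd hf hM)

theorem stmt_4 (a b M : ℝ) (hab : a < b) (f f' f'' : ℝ → ℝ)
    (hf : ∀ x ∈ Set.Icc a b, HasDerivAt f (f' x) x)
    (hf'cont : ContinuousOn f' (Set.Icc a b))
    (hf' : ∀ x ∈ Set.Ioo a b, HasDerivAt f' (f'' x) x)
    (hM : ∀ x ∈ Set.Ioo a b, |f'' x| ≤ M) :
    ∀ n : ℕ, 1 ≤ n →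
      |(∑ k ∈ Finset.range n,
          Real.sqrt (((b - a) / n)^2 +
            (f (a + (k + 1) * ((b - a) / n)) - f (a + k * ((b - a) / n)))^2)) -
        ∑ k ∈ Finset.range n,
          Real.sqrt (1 + f' (a + k * ((b - a) / n)) ^ 2) * ((b - a) / n)| ≤
        M * (b - a)^2 / (2 * n) := by
  intro n hn
  have hn0 : (0 : ℝ) < n := by exact_mod_cast hn
  set δ := (b - a) / n with hδ_def
  have hδ : 0 < δ := div_pos (sub_pos.mpr hab) hn0
  have hstep : ∀ k ∈ range n,
      |√(δ ^ 2 + (f (a + (k + 1) * δ) - f (a + k * δ)) ^ 2) - √(1 + f' (a + k * δ) ^ 2) * δ|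
        ≤ M * δ ^ 2 / 2 := by
    intro k hk
    have hkn : (k : ℝ) + 1 ≤ n := by exact_mod_cast mem_range.mp hk
    have hsub : Icc (a + k * δ) (a + (k + 1) * δ) ⊆ Icc a b := by
      refine Icc_subset_Icc (by nlinarith [k.cast_nonneg (α := ℝ)]) ?_
      calc a + (k + 1) * δ ≤ a + n * δ := by gcongr
        _ = b := by rw [hδ_def]; field_simp; ring
    have hwidth : a + (k + 1) * δ - (a + k * δ) = δ := by ring
    have h := abs_chord_length_sub_tangent_length_le (by linarith) (fun x hx => hf x (hsub hx))
      fun x hx => abs_sub_le_mul_of_abs_deriv_le hf'cont hf' hM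
        (hsub (left_mem_Icc.mpr (hx.1.trans hx.2))) (hsub hx) hx.1
    rwa [hwidth] at h
  calc _ = |∑ k ∈ range n, (√(δ ^ 2 + (f (a + (k + 1) * δ) - f (a + k * δ)) ^ 2)
        - √(1 + f' (a + k * δ) ^ 2) * δ)| := by rw [sum_sub_distrib]
    _ ≤ ∑ k ∈ range n, M * δ ^ 2 / 2 := (abs_sum_le_sum_abs _ _).trans (sum_le_sum hstep)
    _ = M * (b - a) ^ 2 / (2 * n) := by
      rw [sum_const, card_range, nsmul_eq_mul, hδ_def]; field_simp
end
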